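/- Let E : ℂ → ℂ be an entire function satisfying |E(s)| > |E(1 - conj(s))| for all s with Re(s) > 1/2. Define B(s) = -(E(s) - conj(E(1 - conj(s))))/(2i). Then every zero of B lies on the line Re(s) = 1/2. -/

import Mathlib

/-!
A zero `s` of `B` is a point where `E s = conj (E s')` with `s' = 1 - conj s`, the reflection of `s`
in the critical line, so `‖E s‖ = ‖E s'‖`. Since the reflection is an involution exchanging the two
half-planes `Re > 1/2` and `Re < 1/2`, the strict inequality rules out both, leaving `Re s = 1/2`.
-/

open Complex ComplexConjugate

lemma re_one_sub_conj (s : ℂ) : (1 - conj s).re = 1 - s.re := by simp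

lemma one_sub_conj_one_sub_conj (s : ℂ) : 1 - conj (1 - conj s) = s := by simp

lemma eq_of_neg_sub_div_two_I_eq_zero {a b : ℂ} (h : -(a - b) / (2 * I) = 0) : a = b := by
  rw [div_eq_zero_iff, neg_eq_zero, sub_eq_zero] at h
  exact h.resolve_right (by simp [I_ne_zero])

lemma re_eq_half_of_norm_eq_norm_one_sub_conj (E : ℂ → ℂ)
    (hineq : ∀ s : ℂ, 1 / 2 < s.re → ‖E s‖ > ‖E (1 - conj s)‖) {s : ℂ}
    (h : ‖E s‖ = ‖E (1 - conj s)‖) : s.re = 1 / 2 := by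
  rcases lt_trichotomy s.re (1 / 2) with hlt | heq | hgt
  · have hrefl := hineq (1 - conj s) (by rw [re_one_sub_conj]; linarith)
    rw [one_sub_conj_one_sub_conj] at hrefl
    exact absurd h hrefl.ne
  · exact heq
  · exact absurd h (hineq s hgt).ne'

theorem stmt_5_general (E : ℂ → ℂ)
    (hineq : ∀ s : ℂ, 1/2 < s.re →
      ‖E s‖ > ‖E (1 - (starRingEnd ℂ) s)‖)
    (B : ℂ → ℂ)
    (hB : ∀ s, B s = -(E s - (starRingEnd ℂ) (E (1 - (starRingEnd ℂ) s))) / (2 * Complex.I)) :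
    ∀ s : ℂ, B s = 0 → s.re = 1/2 := by
  intro s hs
  have hfixed : E s = conj (E (1 - conj s)) :=
    eq_of_neg_sub_div_two_I_eq_zero (hB s ▸ hs)
  apply re_eq_half_of_norm_eq_norm_one_sub_conj E hineq
  rw [hfixed, norm_conj]

theorem stmt_5 (E : ℂ → ℂ) (hE : Differentiable ℂ E)
    (hineq : ∀ s : ℂ, 1/2 < s.re →
      ‖E s‖ > ‖E (1 - (starRingEnd ℂ) s)‖)
    (B : ℂ → ℂ)
    (hB : ∀ s, B s = -(E s - (starRingEnd ℂ) (E (1 - (starRingEnd ℂ) s))) / (2 * Complex.I)) :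
    ∀ s : ℂ, B s = 0 → s.re = 1/2 :=
  stmt_5_general E hineq B hB
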